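/- The direct product of cycle graphs C_3 × C_4 has total chromatic number 5. -/

import Mathlib

open SimpleGraph

/-- Tensor (direct / categorical) product of simple graphs:
`(u, v)` is adjacent to `(u', v')` iff `u ~ u'` in `G` and `v ~ v'` in `H`. -/
def tensorProd {V W : Type*} (G : SimpleGraph V) (H : SimpleGraph W) :
    SimpleGraph (V × W) where
  Adj x y := G.Adj x.1 y.1 ∧ H.Adj x.2 y.2
  symm := ⟨fun _ _ h => ⟨h.1.symm, h.2.symm⟩⟩
  loopless := ⟨fun x h => G.loopless.irrefl x.1 h.1⟩

instance {V W : Type*} (G : SimpleGraph V) (H : SimpleGraph W)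
    [DecidableRel G.Adj] [DecidableRel H.Adj] : DecidableRel (tensorProd G H).Adj :=
  fun x y => inferInstanceAs (Decidable (G.Adj x.1 y.1 ∧ H.Adj x.2 y.2))

/-- `G` has a proper total coloring with `k` colors: adjacent vertices get distinct
colors, distinct incident edges get distinct colors, and each edge gets a color
distinct from those of both of its endpoints. -/
def HasTotalColoring {V : Type*} (G : SimpleGraph V) (k : ℕ) : Prop :=
  ∃ (cv : V → Fin k) (ce : Sym2 V → Fin k),
    (∀ u v, G.Adj u v → cv u ≠ cv v) ∧
    (∀ u v w, G.Adj u v → G.Adj u w → v ≠ w → ce s(u, v) ≠ ce s(u, w)) ∧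
    (∀ u v, G.Adj u v → ce s(u, v) ≠ cv u ∧ ce s(u, v) ≠ cv v)

/-- The total chromatic number: the least `k` such that `G` has a `k`-total coloring. -/
noncomputable def totalChromaticNumber {V : Type*} (G : SimpleGraph V) : ℕ :=
  sInf {k | HasTotalColoring G k}

/-! A vertex of the 4-regular graph `C₃ × C₄` together with its four edges needs five distinct
colours. Five suffice: colour the vertex `(i, j)` by its row `i`. An edge from `(i, j)` to
`(i + 1, j + 1)` must avoid only the colours of rows `i` and `i + 1`, so give it the colour of the
third row; at every vertex these edges then use exactly the two row colours other than its own.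
The remaining edges, from `(i, j)` to `(i + 1, j - 1)`, form a single 12-cycle because `(1, -1)`
generates `ℤ/3 × ℤ/4`, and they are coloured `3` and `4` alternately. -/

section TotalColoring

variable {V W : Type*}

theorem HasTotalColoring.degree_lt {G : SimpleGraph V} {k : ℕ} (h : HasTotalColoring G k)
    (v : V) [Fintype (G.neighborSet v)] : G.degree v < k := by
  obtain ⟨cv, ce, -, hee, hev⟩ := h
  let f : Option (G.neighborSet v) → Fin k := fun o => o.elim (cv v) fun w => ce s(v, w)
  have hf : Function.Injective f := by
    rintro (_ | ⟨w, hw⟩) (_ | ⟨w', hw'⟩) hww'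
    · rfl
    · exact absurd hww'.symm (hev v w' hw').1
    · exact absurd hww' (hev v w hw).1
    · by_contra hne
      exact hee v w w' hw hw' (by simpa using hne) hww'
  have hcard := Fintype.card_le_of_injective f hf
  rwa [Fintype.card_option, card_neighborSet_eq_degree, Fintype.card_fin] at hcard

theorem tensorProd_neighborFinset [Fintype V] [Fintype W]
    (G : SimpleGraph V) (H : SimpleGraph W) [DecidableRel G.Adj] [DecidableRel H.Adj]
    (v : V) (w : W) :
    (tensorProd G H).neighborFinset (v, w) = G.neighborFinset v ×ˢ H.neighborFinset w := by
  ext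
  simp only [mem_neighborFinset, Finset.mem_product]
  rfl

theorem tensorProd_degree [Fintype V] [Fintype W]
    (G : SimpleGraph V) (H : SimpleGraph W) [DecidableRel G.Adj] [DecidableRel H.Adj]
    (v : V) (w : W) : (tensorProd G H).degree (v, w) = G.degree v * H.degree w := by
  rw [← card_neighborFinset_eq_degree, tensorProd_neighborFinset, Finset.card_product,
    card_neighborFinset_eq_degree, card_neighborFinset_eq_degree]

end TotalColoring

namespace C3C4

def IsDiagonal (x y : Fin 3 × Fin 4) : Prop :=
  (y.1 - x.1 = 1 ∧ y.2 - x.2 = 1) ∨ (x.1 - y.1 = 1 ∧ x.2 - y.2 = 1)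

instance : DecidableRel IsDiagonal := fun _ _ => inferInstanceAs (Decidable (_ ∨ _))

def vertexColor (x : Fin 3 × Fin 4) : Fin 5 := Fin.castLE (by norm_num) x.1

/-- `-(a + b)` is the third element of `Fin 3` when `a ≠ b`; on an antidiagonal edge
`(i, j) — (i + 1, j - 1)` the column sum `2 j - 1` is `1` or `3` according to the parity of `j`,
which alternates along the 12-cycle. -/
def pairColor (x y : Fin 3 × Fin 4) : Fin 5 :=
  if IsDiagonal x y then Fin.castLE (by norm_num) (-(x.1 + y.1))
  else if x.2 + y.2 = 1 then 4 else 3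

lemma pairColor_comm (x y : Fin 3 × Fin 4) : pairColor x y = pairColor y x := by
  simp only [pairColor, IsDiagonal, or_comm, add_comm]

def edgeColor : Sym2 (Fin 3 × Fin 4) → Fin 5 := Sym2.lift ⟨pairColor, pairColor_comm⟩

lemma hasTotalColoring : HasTotalColoring (tensorProd (cycleGraph 3) (cycleGraph 4)) 5 :=
  ⟨vertexColor, edgeColor, fun _ _ h => (Fin.castLE_injective _).ne h.1.ne, by decide, by decide⟩

end C3C4

theorem c3_tensor_c4 :
    totalChromaticNumber (tensorProd (cycleGraph 3) (cycleGraph 4)) = 5 := by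
  refine IsLeast.csInf_eq ⟨C3C4.hasTotalColoring, fun k hk => ?_⟩
  have hdeg := (hk : HasTotalColoring _ k).degree_lt (0, 0)
  rwa [tensorProd_degree, cycleGraph_degree_three_le, cycleGraph_degree_three_le] at hdeg
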